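/- arXiv:1009.2486 — 8 statements merged into one kernel-verified Lean document; each statement's English description precedes it below -/
import Mathlib

section
/- For every nonnegative integer n, the identity $\sum_{k=0}^n \binom{n}{k}\binom{n+k}{k}\frac{1}{k+1} = \sum_{k=0}^n \binom{n+k}{2k} C_k$ holds, where $C_k = \binom{2k}{k}/(k+1)$ is the k-th Catalan number. -/
/-! The identity holds term by term: trinomial revision gives
`C(n+k, 2k) C(2k, k) = C(n, k) C(n+k, k)`, and `C(2k, k) = (k+1) C_k`. -/

theorem Nat.add_choose_two_mul_mul_choose (n k : ℕ) :
    (n + k).choose (2 * k) * (2 * k).choose k = n.choose k * (n + k).choose k := by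
  rcases le_or_gt k n with hkn | hnk
  · rw [Nat.choose_mul (by omega), two_mul, Nat.add_sub_cancel, Nat.add_sub_cancel, mul_comm]
  · rw [Nat.choose_eq_zero_of_lt hnk, Nat.choose_eq_zero_of_lt (by omega : n + k < 2 * k),
      zero_mul, zero_mul]

theorem cast_catalan_eq_choose_div {K : Type*} [Field K] [CharZero K] (k : ℕ) :
    (catalan k : K) = (2 * k).choose k / (k + 1) := by
  rw [eq_div_iff (Nat.cast_add_one_ne_zero k), ← Nat.centralBinom_eq_two_mul_choose,
    ← succ_mul_catalan_eq_centralBinom]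
  push_cast
  ring

theorem schroeder_two_forms (n : ℕ) :
    ∑ k ∈ Finset.range (n + 1),
        (n.choose k * (n + k).choose k : ℚ) / (k + 1) =
      ∑ k ∈ Finset.range (n + 1), ((n + k).choose (2 * k) * catalan k : ℚ) := by
  refine Finset.sum_congr rfl fun k _ => ?_
  rw [cast_catalan_eq_choose_div, mul_div_assoc', ← Nat.cast_mul, ← Nat.cast_mul,
    Nat.add_choose_two_mul_mul_choose]
end

section
/- For every nonnegative integer n and every x, $(-1)^n D_n(x) = D_n(-x-1)$, where $D_n(x) = \sum_{k=0}^n \binom{n}{k}\binom{n+k}{k} x^k$. -/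
/-!
Up to the sign of the variable, `D_n` is the shifted Legendre polynomial: `D_n(x) = P_n(-x)`.
The reflection is then the symmetry `P_n(1 - y) = (-1)^n P_n(y)` at `y = -x`.
-/

/-- The Delannoy polynomial `D_n(x)` evaluated at `x` in a commutative ring. -/
def delannoyPoly {R : Type*} [CommRing R] (n : ℕ) (x : R) : R :=
  ∑ k ∈ Finset.range (n + 1), (n.choose k * (n + k).choose k : R) * x ^ k

open Polynomial

theorem delannoyPoly_eq_aeval_neg_shiftedLegendre {R : Type*} [CommRing R] (n : ℕ) (x : R) :
    delannoyPoly n x = aeval (-x) (shiftedLegendre n) := by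
  simp only [delannoyPoly, shiftedLegendre, map_sum, map_mul, map_pow, map_neg, map_one,
    map_natCast, aeval_X]
  refine Finset.sum_congr rfl fun k _ => ?_
  have hsq : ((-1 : R) ^ k) ^ 2 = 1 := by rw [← pow_mul, pow_mul', neg_one_sq, one_pow]
  rw [neg_pow x, Nat.choose_symm_add]
  linear_combination -(n.choose k * (n + k).choose k * x ^ k : R) * hsq

theorem delannoyPoly_reflect {R : Type*} [CommRing R] (n : ℕ) (x : R) :
    (-1) ^ n * delannoyPoly n x = delannoyPoly n (-x - 1) := by
  rw [delannoyPoly_eq_aeval_neg_shiftedLegendre, delannoyPoly_eq_aeval_neg_shiftedLegendre,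
    shiftedLegendre_eval_symm n (-x), ← mul_assoc, ← mul_pow, neg_one_mul, neg_neg, one_pow,
    one_mul, neg_sub, sub_neg_eq_add]
end

section
/- For every nonnegative integer n, $\sum_{r=0}^{2n} \frac{(-1)^r \binom{2n}{r}}{2n+1-2r} = \frac{(-16)^n}{(2n+1)\binom{2n}{n}}$. -/
/-!
Writing `2n + 1 - 2r = x + r h` with `x = 2n + 1`, `h = -2`, the sum is, up to the sign
`(-1)^m`, the `m`-th forward difference with step `h` of `y ↦ y⁻¹` at `x`, where `m = 2n`.
That difference is `(-1)^m m! h^m / ∏_{k ≤ m} (x + k h)`, and here the product runs over the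
odd numbers `2n + 1, 2n - 1, …, -(2n - 1)`; it equals `(-1)^n (2n + 1)! binom(2n, n) / 4^n`.
-/

open Finset Nat

theorem fwdDiff_iter_inv_apply {K : Type*} [Field K] (h x : K) (m : ℕ)
    (hx : ∀ k ≤ m, x + k * h ≠ 0) :
    (fwdDiff h)^[m] (fun y : K ↦ y⁻¹) x =
      (-1) ^ m * m ! * h ^ m / ∏ k ∈ range (m + 1), (x + k * h) := by
  induction m generalizing x with
  | zero => simp
  | succ m ih =>
    have hx' : ∀ k ≤ m, x + h + k * h ≠ 0 := fun k hk ↦ by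
      convert hx (k + 1) (by omega) using 1; push_cast; ring
    rw [Function.iterate_succ_apply', fwdDiff, ih x fun k hk ↦ hx k (by omega), ih (x + h) hx']
    set P := ∏ k ∈ range (m + 1), (x + k * h)
    set Q := ∏ k ∈ range (m + 1), (x + h + k * h)
    have hsucc : ∏ k ∈ range (m + 1 + 1), (x + k * h) = P * (x + (m + 1) * h) := by
      rw [prod_range_succ]; push_cast; rfl
    have hsucc' : ∏ k ∈ range (m + 1 + 1), (x + k * h) = Q * x := by
      rw [prod_range_succ']; push_cast; simp only [Q, zero_mul, add_zero]
      congr 1; exact prod_congr rfl fun k _ ↦ by ring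
    have hP : P ≠ 0 := prod_ne_zero_iff.2 fun k hk ↦ hx k (by simp at hk; omega)
    have hQ : Q ≠ 0 := prod_ne_zero_iff.2 fun k hk ↦ hx' k (by simp at hk; omega)
    have hx0 : x ≠ 0 := by simpa using hx 0 (zero_le _)
    have hxm : x + (m + 1) * h ≠ 0 := by exact_mod_cast hx (m + 1) le_rfl
    rw [hsucc, factorial_succ]
    push_cast
    field_simp
    linear_combination (-1) ^ m * m ! * h ^ m * (hsucc.symm.trans hsucc')

theorem sum_range_neg_one_pow_mul_choose_div {K : Type*} [Field K] (h x : K) (m : ℕ)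
    (hx : ∀ k ≤ m, x + k * h ≠ 0) :
    ∑ r ∈ range (m + 1), (-1) ^ r * (m.choose r : K) / (x + r * h) =
      m ! * h ^ m / ∏ k ∈ range (m + 1), (x + k * h) := by
  have hdiff := fwdDiff_iter_eq_sum_shift h (fun y : K ↦ y⁻¹) m x
  rw [fwdDiff_iter_inv_apply h x m hx] at hdiff
  calc ∑ r ∈ range (m + 1), (-1) ^ r * (m.choose r : K) / (x + r * h)
      = (-1) ^ m *
          ∑ r ∈ range (m + 1), ((-1 : ℤ) ^ (m - r) * m.choose r) • (x + r • h)⁻¹ := by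
        rw [mul_sum]
        refine sum_congr rfl fun r hr ↦ ?_
        have hrm : r ≤ m := by simp at hr; omega
        have hsign : (-1 : K) ^ m * (-1) ^ (m - r) = (-1) ^ r := by
          rw [← pow_sub_mul_pow (-1 : K) hrm, mul_right_comm, ← pow_add, ← two_mul, pow_mul]
          simp
        rw [zsmul_eq_mul, nsmul_eq_mul]
        push_cast
        rw [← hsign]
        ring
    _ = m ! * h ^ m / ∏ k ∈ range (m + 1), (x + k * h) := by
        rw [← hdiff, ← mul_div_assoc, ← mul_assoc, ← mul_assoc, ← pow_add, ← two_mul,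
          pow_mul]
        simp

theorem prod_range_sub_two_mul_mul_neg_four_pow {R : Type*} [CommRing R] (n : ℕ) :
    (∏ k ∈ range (2 * n + 1), ((2 * n + 1 : R) - 2 * k)) * (-4) ^ n =
      (2 * n + 1)! * n.centralBinom := by
  induction n with
  | zero => simp
  | succ n ih =>
    have hsplit : ∏ k ∈ range (2 * (n + 1) + 1), ((2 * (n + 1 : ℕ) + 1 : R) - 2 * k) =
        (2 * n + 3) * (∏ k ∈ range (2 * n + 1), ((2 * n + 1 : R) - 2 * k)) *
          (-(2 * n + 1)) := by
      rw [show 2 * (n + 1) + 1 = 2 * n + 1 + 1 + 1 by ring, prod_range_succ, prod_range_succ']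
      push_cast
      simp only [show ∀ k : R, 2 * ((n : R) + 1) + 1 - 2 * (k + 1) = 2 * n + 1 - 2 * k from
        fun k ↦ by ring]
      ring
    have hcentral : ((n + 1) * (n + 1).centralBinom : R) = 2 * (2 * n + 1) * n.centralBinom := by
      exact_mod_cast congrArg (Nat.cast : ℕ → R) (succ_mul_centralBinom_succ n)
    push_cast at hsplit ⊢
    rw [hsplit, show 2 * (n + 1) + 1 = (2 * n + 1) + 1 + 1 by ring, factorial_succ, factorial_succ]
    push_cast
    linear_combination
      4 * (2 * n + 3) * (2 * n + 1) * ih - 2 * (2 * n + 3) * (2 * n + 1)! * hcentral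

theorem sun_identity_3_1 (n : ℕ) :
    ∑ r ∈ Finset.range (2 * n + 1),
        ((-1) ^ r * ((2 * n).choose r : ℚ)) / ((2 * n + 1 : ℚ) - 2 * r) =
      (-16 : ℚ) ^ n / ((2 * n + 1) * ((2 * n).choose n : ℚ)) := by
  have hodd : ∀ k : ℕ, (2 * n + 1 : ℚ) - 2 * k ≠ 0 := fun k h ↦ by
    have : ((2 * n + 1 : ℕ) : ℚ) = (2 * k : ℕ) := by push_cast; linarith
    norm_cast at this; omega
  have hden (k : ℕ) : (2 * n + 1 : ℚ) + k * (-2) = 2 * n + 1 - 2 * k := by ring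
  have hsum := sum_range_neg_one_pow_mul_choose_div (-2) (2 * n + 1 : ℚ) (2 * n)
    fun k _ ↦ hden k ▸ hodd k
  simp only [hden] at hsum
  have hprod := prod_range_sub_two_mul_mul_neg_four_pow (R := ℚ) n
  rw [factorial_succ] at hprod
  push_cast at hprod
  have hcentral_ne : (n.centralBinom : ℚ) ≠ 0 := by exact_mod_cast (centralBinom_pos n).ne'
  have hprod_ne : ∏ k ∈ range (2 * n + 1), ((2 * n + 1 : ℚ) - 2 * k) ≠ 0 :=
    prod_ne_zero_iff.2 fun k _ ↦ hodd k
  rw [hsum, ← centralBinom_eq_two_mul_choose]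
  field_simp
  rw [pow_mul, show (-16 : ℚ) = -4 * 4 by norm_num, mul_pow]
  linear_combination (-(4 : ℚ) ^ n) * hprod
end

section
/- For every nonnegative integer n, $\sum_{r=0}^{2n} \frac{(-1)^r \binom{2n}{r}}{(2n+1-2r)^2} = \frac{(-16)^n}{(2n+1)^2\binom{2n}{n}}$. -/
/-!
Up to the sign `(-1)^m`, `∑ (-1)^r C(m,r) f(x+r)` is the `m`-th forward difference of `f` at `x`.
For `f y = 1/y²` an induction on `m` evaluates the sum as `m! (∑ₖ 1/(x+k)) / ∏ₖ (x+k)`, the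
derivative of the partial-fraction identity `∑ (-1)^r C(m,r)/(x+r) = m! / ∏ₖ (x+k)`. Since
`(2n+1-2r)² = 4 (x+r)²` with `x = -(2n+1)/2`, the theorem is the case `m = 2n` at this `x`. There
the points `x+k` are the half-integers from `-(n+1/2)` to `n-1/2`: their reciprocals cancel in pairs
except for `-2/(2n+1)`, and their product is `-(2n+1)! C(2n,n) / (2 (-16)^n)`.
-/

open Finset Nat fwdDiff

lemma sum_alternating_choose_mul_eq_fwdDiff_iter {R : Type*} [CommRing R] (f : R → R) (m : ℕ)
    (x : R) :
    ∑ r ∈ range (m + 1), (-1) ^ r * m.choose r * f (x + r) = (-1) ^ m * (Δ_[1])^[m] f x := by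
  rw [fwdDiff_iter_eq_sum_shift, mul_sum]
  refine sum_congr rfl fun r hr ↦ ?_
  obtain ⟨d, rfl⟩ := Nat.exists_eq_add_of_le (Nat.lt_succ_iff.1 (mem_range.1 hr))
  have hd : ((-1 : R) ^ d) * (-1) ^ d = 1 := by rw [← mul_pow]; simp
  rw [zsmul_eq_mul, nsmul_one, Nat.add_sub_cancel_left, pow_add]
  push_cast
  linear_combination (-(-1) ^ r * ((r + d).choose r : R) * f (x + r)) * hd

section
variable {K : Type*} [Field K]

lemma fwdDiff_iter_inv_sq (m : ℕ) (x : K) (hx : ∀ k ∈ range (m + 1), x + k ≠ 0) :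
    (Δ_[1])^[m] (fun y : K ↦ (y ^ 2)⁻¹) x =
      (-1) ^ m * m ! * (∑ k ∈ range (m + 1), (x + k)⁻¹) / ∏ k ∈ range (m + 1), (x + k) := by
  induction m generalizing x with
  | zero => simp [sq, div_eq_mul_inv]
  | succ m ih =>
    have hx0 : x ≠ 0 := by simpa using hx 0 (by simp)
    have hxm : x + (m + 1) ≠ 0 := by exact_mod_cast hx (m + 1) (by simp)
    have hxl : ∀ k ∈ range (m + 1), x + k ≠ 0 := fun k hk ↦
      hx k (mem_range.2 (by have := mem_range.1 hk; omega))
    have hxr : ∀ k ∈ range (m + 1), x + 1 + k ≠ 0 := fun k hk ↦ by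
      simpa [add_assoc, add_comm (1 : K)] using hx (k + 1) (by simpa using hk)
    have shift (k : ℕ) : x + ((k + 1 : ℕ) : K) = x + 1 + k := by push_cast; ring
    have prod_left :
        ∏ k ∈ range (m + 1), (x + 1 + k) = (∏ k ∈ range (m + 1 + 1), (x + k)) / x := by
      rw [eq_div_iff hx0, prod_range_succ' (fun k : ℕ ↦ x + k), prod_congr rfl fun k _ ↦ shift k]
      simp
    have prod_right : ∏ k ∈ range (m + 1), (x + k) =
        (∏ k ∈ range (m + 1 + 1), (x + k)) / (x + (m + 1)) := by
      rw [eq_div_iff hxm, prod_range_succ (fun k : ℕ ↦ x + k) (m + 1)]; push_cast; ring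
    have sum_left :
        ∑ k ∈ range (m + 1), (x + 1 + k)⁻¹ = ∑ k ∈ range (m + 1 + 1), (x + k)⁻¹ - x⁻¹ := by
      rw [eq_sub_iff_add_eq, sum_range_succ' (fun k : ℕ ↦ (x + k)⁻¹),
        sum_congr rfl fun k _ ↦ congrArg Inv.inv (shift k)]
      simp
    have sum_right : ∑ k ∈ range (m + 1), (x + k)⁻¹ =
        ∑ k ∈ range (m + 1 + 1), (x + k)⁻¹ - (x + (m + 1))⁻¹ := by
      rw [eq_sub_iff_add_eq, sum_range_succ (fun k : ℕ ↦ (x + k)⁻¹) (m + 1)]; push_cast; ring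
    have hP : ∏ k ∈ range (m + 1 + 1), (x + k) ≠ 0 := prod_ne_zero_iff.2 hx
    rw [Function.iterate_succ_apply', fwdDiff, ih (x + 1) hxr, ih x hxl, prod_left, prod_right,
      sum_left, sum_right, factorial_succ]
    push_cast
    field_simp
    ring

theorem sum_alternating_choose_div_sq (m : ℕ) (x : K) (hx : ∀ k ∈ range (m + 1), x + k ≠ 0) :
    ∑ r ∈ range (m + 1), (-1) ^ r * m.choose r / (x + r) ^ 2 =
      m ! * (∑ k ∈ range (m + 1), (x + k)⁻¹) / ∏ k ∈ range (m + 1), (x + k) := by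
  simp only [div_eq_mul_inv]
  rw [sum_alternating_choose_mul_eq_fwdDiff_iter (fun y ↦ (y ^ 2)⁻¹), fwdDiff_iter_inv_sq m x hx,
    div_eq_mul_inv, ← mul_assoc, ← mul_assoc, ← mul_assoc, ← pow_add, Even.neg_one_pow ⟨m, rfl⟩,
    one_mul]
end

section
variable {K : Type*} [Field K] [CharZero K]

lemma add_neg_odd_div_two_shift (n k : ℕ) :
    (-(2 * ((n + 1 : ℕ) : K) + 1) / 2 + ((k + 1 : ℕ) : K)) = -(2 * n + 1) / 2 + k := by
  push_cast; ring

lemma sum_inv_add_neg_odd_div_two (n : ℕ) :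
    ∑ k ∈ range (2 * n + 1), (-(2 * n + 1) / 2 + k : K)⁻¹ = -2 / (2 * n + 1) := by
  induction n with
  | zero => norm_num
  | succ n ih =>
    rw [show 2 * (n + 1) + 1 = 2 * n + 1 + 1 + 1 by ring, sum_range_succ, sum_range_succ',
      sum_congr rfl fun k _ ↦ congrArg Inv.inv (add_neg_odd_div_two_shift n k), ih]
    have h1 : (2 * n + 1 : K) ≠ 0 := by exact_mod_cast (2 * n).succ_ne_zero
    have h3 : (2 * n + 3 : K) ≠ 0 := by exact_mod_cast (2 * n + 2).succ_ne_zero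
    push_cast
    rw [show 2 * ((n : K) + 1) + 1 = 2 * n + 3 by ring, add_zero,
      show -(2 * n + 3) / 2 + (2 * n + 2 : K) = (2 * n + 1) / 2 by ring]
    field_simp
    ring

lemma prod_add_neg_odd_div_two (n : ℕ) :
    ∏ k ∈ range (2 * n + 1), (-(2 * n + 1) / 2 + k : K) =
      -((2 * n + 1)! * n.centralBinom) / (2 * (-16) ^ n) := by
  induction n with
  | zero => norm_num
  | succ n ih =>
    rw [show 2 * (n + 1) + 1 = 2 * n + 1 + 1 + 1 by ring, prod_range_succ, prod_range_succ',
      prod_congr rfl fun k _ ↦ add_neg_odd_div_two_shift n k, ih, factorial_succ (2 * n + 1 + 1),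
      factorial_succ (2 * n + 1)]
    have hc : ((n + 1).centralBinom : K) = 2 * (2 * n + 1) * n.centralBinom / (n + 1) := by
      rw [eq_div_iff (Nat.cast_add_one_ne_zero n)]
      exact_mod_cast (mul_comm _ _).trans (Nat.succ_mul_centralBinom_succ n)
    push_cast
    rw [hc, show 2 * ((n : K) + 1) + 1 = 2 * n + 3 by ring, add_zero,
      show -(2 * n + 3) / 2 + (2 * n + 2 : K) = (2 * n + 1) / 2 by ring]
    field_simp
    ring

end

theorem sun_identity_3_2 (n : ℕ) :
    ∑ r ∈ Finset.range (2 * n + 1),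
        ((-1) ^ r * ((2 * n).choose r : ℚ)) / ((2 * n + 1 : ℚ) - 2 * r) ^ 2 =
      (-16 : ℚ) ^ n / ((2 * n + 1) ^ 2 * ((2 * n).choose n : ℚ)) := by
  have hx : ∀ k ∈ range (2 * n + 1), (-(2 * n + 1) / 2 + k : ℚ) ≠ 0 := by
    refine prod_ne_zero_iff.1 ?_
    rw [prod_add_neg_odd_div_two]
    simp [factorial_ne_zero, centralBinom_ne_zero]
  have rescale (r : ℕ) : ((-1) ^ r * ((2 * n).choose r : ℚ)) / ((2 * n + 1 : ℚ) - 2 * r) ^ 2 =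
      4⁻¹ * ((-1) ^ r * (2 * n).choose r / (-(2 * n + 1) / 2 + r) ^ 2) := by
    rw [show ((2 * n + 1 : ℚ) - 2 * r) ^ 2 = (-(2 * n + 1) / 2 + r) ^ 2 * 4 by ring, ← div_div]
    ring
  rw [sum_congr rfl fun r _ ↦ rescale r, ← mul_sum, sum_alternating_choose_div_sq _ _ hx,
    sum_inv_add_neg_odd_div_two, prod_add_neg_odd_div_two, ← centralBinom_eq_two_mul_choose,
    factorial_succ]
  have : (2 * n + 1 : ℚ) ≠ 0 := by exact_mod_cast (2 * n).succ_ne_zero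
  push_cast
  field_simp
  ring
end

section
/- For every nonnegative integer n, $\sum_{r=0}^{2n} \frac{\binom{2n}{r}}{2n+1-2r} = \frac{4^n}{2n+1}$. -/
/-!
Multiplying the sum by `2n + 1` and writing `(2n + 1)/(2n + 1 - 2r) = 1 + 2r/(2n + 1 - 2r)` gives
`∑ C(2n, r) = 4^n` plus twice `∑ r C(2n, r)/(2n + 1 - 2r)`. Since `r C(N, r) = N C(N - 1, r - 1)`,
the latter is `N ∑ C(N - 1, s)/(N - 1 - 2s)`, which vanishes because the substitution `s ↦ N - 1 - s`
flips the sign of every term.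
-/

open Finset

section
variable {K : Type*} [Field K] [CharZero K]

/-- For even `M` the middle term has denominator `0`, hence value `0`, so no parity hypothesis
is needed. -/
theorem sum_choose_div_sub_two_mul_eq_zero (M : ℕ) :
    ∑ s ∈ range (M + 1), (M.choose s : K) / (M - 2 * s) = 0 := by
  set f : ℕ → K := fun s => (M.choose s : K) / (M - 2 * s)
  have antisymm : ∀ s ∈ range (M + 1), f (M + 1 - 1 - s) = -f s := by
    intro s hs
    have hsM : s ≤ M := Nat.lt_succ_iff.mp (mem_range.mp hs)
    simp only [f, Nat.add_sub_cancel, Nat.choose_symm hsM, Nat.cast_sub hsM, ← div_neg]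
    ring_nf
  have h := sum_range_reflect f (M + 1)
  rw [sum_congr rfl antisymm, sum_neg_distrib, eq_comm] at h
  exact self_eq_neg.mp h

theorem sum_mul_choose_div_succ_sub_two_mul_eq_zero (N : ℕ) :
    ∑ r ∈ range (N + 1), (r * N.choose r : K) / (N + 1 - 2 * r) = 0 := by
  cases N with
  | zero => simp
  | succ M =>
    have term : ∀ s : ℕ,
        ((s + 1 : ℕ) * (M + 1).choose (s + 1) : K) / ((M + 1 : ℕ) + 1 - 2 * (s + 1 : ℕ)) =
          (M + 1) * ((M.choose s : K) / (M - 2 * s)) := by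
      intro s
      rw [mul_comm, ← Nat.cast_mul, ← Nat.add_one_mul_choose_eq]
      push_cast
      ring
    rw [sum_range_succ', sum_congr rfl fun s _ => term s, ← mul_sum,
      sum_choose_div_sub_two_mul_eq_zero]
    simp
end

theorem sun_identity_unsigned (n : ℕ) :
    ∑ r ∈ Finset.range (2 * n + 1),
        ((2 * n).choose r : ℚ) / ((2 * n + 1 : ℚ) - 2 * r) =
      (4 : ℚ) ^ n / (2 * n + 1) := by
  have hden : ∀ r : ℕ, (2 * n + 1 : ℚ) - 2 * r ≠ 0 := by
    intro r h
    have : 2 * n + 1 = 2 * r := by exact_mod_cast (sub_eq_zero.mp h)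
    omega
  have split : ∀ r : ℕ, (2 * n + 1 : ℚ) * (((2 * n).choose r : ℚ) / ((2 * n + 1 : ℚ) - 2 * r))
      = (2 * n).choose r + 2 * ((r * (2 * n).choose r : ℚ) / ((2 * n + 1 : ℚ) - 2 * r)) := by
    intro r
    field_simp [hden r]
    ring
  rw [eq_div_iff (by positivity), mul_comm, mul_sum, sum_congr rfl fun r _ => split r,
    sum_add_distrib, ← mul_sum]
  have weighted := sum_mul_choose_div_succ_sub_two_mul_eq_zero (K := ℚ) (2 * n)
  push_cast at weighted
  rw [weighted, mul_zero, add_zero]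
  exact_mod_cast (Nat.sum_range_choose (2 * n)).trans (by rw [pow_mul]; norm_num)
end

section
/- Let p be an odd prime. Then $\sum_{k=1}^{p-1} \frac{D_k}{k} \equiv -\frac{2^{p-1}-1}{p} \pmod{p}$, where $1/k$ denotes the inverse of k mod p. -/
/-!
Split off the `j = 0` term of `D_k = ∑_j C(k,j) C(k+j,j)`, which contributes `∑ 1/k ≡ 0`, and
use `C(k,j)/k = C(k-1,j-1)/j`. Modulo `p`, `C(k+j,j) ≡ (-1)^j C(p-1-k,j)`, so by the upper
Vandermonde identity `∑_k C(k-1,j-1) C(p-1-k,j) = C(p-1,2j)` the inner sum over `k` is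
`(-1)^j C(p-1,2j)`, which is `(-1)^j` for `j ≤ (p-1)/2` and `0` beyond. What remains is
`∑_{j ≤ (p-1)/2} (-1)^j/j`, and `2^(p-1) - 1 = ∑_{1 ≤ j ≤ (p-1)/2} C(p,j)` with
`C(p,j)/p ≡ (-1)^(j-1)/j` identifies it with minus the Fermat quotient.
-/

/-- The `n`-th central Delannoy number. -/
def delannoy (n : ℕ) : ℕ := ∑ k ∈ Finset.range (n + 1), n.choose k * (n + k).choose k

open Finset

theorem Nat.sum_antidiagonal_choose_mul_choose (a b n : ℕ) :
    ∑ ij ∈ antidiagonal n, ij.1.choose a * ij.2.choose b = (n + 1).choose (a + b + 1) := by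
  induction n generalizing b with
  | zero => rcases a with _ | a <;> rcases b with _ | b <;> simp [Nat.choose_eq_zero_of_lt]
  | succ n ih =>
    rw [Nat.sum_antidiagonal_succ']
    cases b with
    | zero =>
      have h := ih 0
      simp only [Nat.choose_zero_right, mul_one, add_zero] at h ⊢
      rw [h, Nat.choose_succ_succ' (n + 1), add_comm]
    | succ b =>
      simp only [Nat.choose_succ_succ' _ b, mul_add, sum_add_distrib, ih, Nat.choose_zero_succ,
        mul_zero, zero_add]
      rw [← add_assoc a b 1, Nat.choose_succ_succ' (n + 1) (a + b + 1)]

theorem Nat.sum_Icc_choose_sub_one_mul_choose_sub (a b n : ℕ) :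
    ∑ k ∈ Icc 1 n, (k - 1).choose a * (n - k).choose b = n.choose (a + b + 1) := by
  cases n with
  | zero => simp
  | succ n =>
    rw [← Nat.sum_antidiagonal_choose_mul_choose, Nat.sum_antidiagonal_eq_sum_range_succ
      (fun i j => i.choose a * j.choose b), ← Ico_add_one_right_eq_Icc, sum_Ico_eq_sum_range]
    refine sum_congr rfl fun i _ => ?_
    rw [add_tsub_cancel_left, add_comm 1 i, Nat.add_sub_add_right]

theorem Nat.cast_ascFactorial_eq_neg_one_pow_mul_descFactorial {R : Type*} [CommRing R]
    {m n : ℕ} (h : (m + n : R) = 0) (j : ℕ) :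
    (m.ascFactorial j : R) = (-1) ^ j * n.descFactorial j := by
  rw [Nat.cast_ascFactorial, eq_neg_of_add_eq_zero_left h,
    ascPochhammer_eval_neg_eq_descPochhammer, descPochhammer_eval_eq_descFactorial]

theorem Nat.cast_choose_mul_inv_eq {F : Type*} [Field F] {k j : ℕ} (hk : (k : F) ≠ 0)
    (hj : (j : F) ≠ 0) :
    (k.choose j : F) * (k : F)⁻¹ = ((k - 1).choose (j - 1) : F) * (j : F)⁻¹ := by
  obtain ⟨k, rfl⟩ := Nat.exists_eq_add_one_of_ne_zero (n := k) (by rintro rfl; simp at hk)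
  obtain ⟨j, rfl⟩ := Nat.exists_eq_add_one_of_ne_zero (n := j) (by rintro rfl; simp at hj)
  have h := congrArg (Nat.cast : ℕ → F) (Nat.add_one_mul_choose_eq k j)
  push_cast at h hk hj ⊢
  field_simp
  exact h.symm

theorem Finset.sum_range_succ_eq_add_sum_Icc {M : Type*} [AddCommMonoid M] (f : ℕ → M) (n : ℕ) :
    ∑ i ∈ range (n + 1), f i = f 0 + ∑ i ∈ Icc 1 n, f i := by
  rw [range_eq_Ico, sum_eq_sum_Ico_succ_bot n.succ_pos, zero_add, Nat.succ_eq_add_one,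
    Ico_add_one_right_eq_Icc]

theorem delannoy_eq_one_add_sum {k n : ℕ} (hk : k ≤ n) :
    delannoy k = 1 + ∑ j ∈ Icc 1 n, k.choose j * (k + j).choose j := by
  rw [delannoy, sum_subset (range_subset_range.mpr (Nat.succ_le_succ hk)) fun j hj hjk => ?_,
    sum_range_succ_eq_add_sum_Icc]
  · simp
  · rw [mem_range, not_lt] at hjk
    rw [Nat.choose_eq_zero_of_lt hjk, zero_mul]

namespace ZMod

variable {p : ℕ} [Fact p.Prime]

theorem natCast_factorial_ne_zero {j : ℕ} (hj : j < p) : (j.factorial : ZMod p) ≠ 0 := by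
  rw [Ne, ZMod.natCast_eq_zero_iff, (Fact.out : p.Prime).dvd_factorial]
  omega

theorem natCast_choose_add_eq {k j : ℕ} (hk : k < p) (hj : j < p) :
    ((k + j).choose j : ZMod p) = (-1) ^ j * (p - 1 - k).choose j := by
  refine mul_left_cancel₀ (natCast_factorial_ne_zero hj) ?_
  have hsum : ((k + 1 : ℕ) + (p - 1 - k : ℕ) : ZMod p) = 0 := by
    rw [← Nat.cast_add, show k + 1 + (p - 1 - k) = p by omega, ZMod.natCast_self]
  rw [mul_left_comm, ← Nat.cast_mul, ← Nat.cast_mul, ← Nat.ascFactorial_eq_factorial_mul_choose,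
    ← Nat.descFactorial_eq_factorial_mul_choose,
    Nat.cast_ascFactorial_eq_neg_one_pow_mul_descFactorial hsum]

theorem natCast_choose_sub_one {j : ℕ} (hj : j < p) :
    ((p - 1).choose j : ZMod p) = (-1) ^ j := by
  have h := natCast_choose_add_eq (p := p) (Fact.out : p.Prime).pos hj
  rw [zero_add, Nat.choose_self, Nat.cast_one, Nat.sub_zero] at h
  calc ((p - 1).choose j : ZMod p) = ((-1) ^ j * (-1) ^ j) * (p - 1).choose j := by
        rw [← mul_pow]
        simp
    _ = (-1) ^ j := by rw [mul_assoc, ← h, mul_one]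

theorem natCast_ne_zero_of_mem_Icc {k : ℕ} (hk : k ∈ Icc 1 (p - 1)) : (k : ZMod p) ≠ 0 := by
  rw [mem_Icc] at hk
  rw [Ne, ZMod.natCast_eq_zero_iff]
  exact fun h => absurd (Nat.le_of_dvd (by omega) h) (by omega)

theorem sum_Icc_inv_natCast_eq_zero (hp : p ≠ 2) :
    ∑ k ∈ Icc 1 (p - 1), (k : ZMod p)⁻¹ = 0 := by
  refine sum_involution (fun k _ => p - k) (fun k hk => ?_) (fun k hk _ => ?_)
    (fun k hk => ?_) (fun k hk => ?_)
  · rw [mem_Icc] at hk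
    rw [Nat.cast_sub (by omega), ZMod.natCast_self, zero_sub, inv_neg, add_neg_cancel]
  · rw [mem_Icc] at hk
    have := (Fact.out : p.Prime).eq_one_or_self_of_dvd 2
    omega
  · simp only [mem_Icc] at hk ⊢; omega
  · simp only [mem_Icc] at hk; omega

theorem sum_Icc_choose_sub_one_mul_choose_add {j : ℕ} (hj : j ∈ Icc 1 (p - 1)) :
    ∑ k ∈ Icc 1 (p - 1), ((k - 1).choose (j - 1) * (k + j).choose j : ZMod p) =
      (-1) ^ j * (p - 1).choose (2 * j) := by
  rw [mem_Icc] at hj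
  calc ∑ k ∈ Icc 1 (p - 1), ((k - 1).choose (j - 1) * (k + j).choose j : ZMod p)
      = ∑ k ∈ Icc 1 (p - 1),
          (-1) ^ j * (((k - 1).choose (j - 1) * (p - 1 - k).choose j : ℕ) : ZMod p) := by
        refine sum_congr rfl fun k hk => ?_
        rw [mem_Icc] at hk
        rw [natCast_choose_add_eq (by omega) (by omega)]
        push_cast
        ring
    _ = (-1) ^ j * (p - 1).choose (2 * j) := by
        rw [← mul_sum, ← Nat.cast_sum, Nat.sum_Icc_choose_sub_one_mul_choose_sub,
          show j - 1 + j + 1 = 2 * j by omega]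

theorem sum_delannoy_mul_inv :
    ∑ k ∈ Icc 1 (p - 1), (delannoy k : ZMod p) * (k : ZMod p)⁻¹ =
      ∑ k ∈ Icc 1 (p - 1), (k : ZMod p)⁻¹ +
        ∑ j ∈ Icc 1 (p - 1), (-1) ^ j * ((p - 1).choose (2 * j) : ZMod p) * (j : ZMod p)⁻¹ := by
  calc ∑ k ∈ Icc 1 (p - 1), (delannoy k : ZMod p) * (k : ZMod p)⁻¹
      = ∑ k ∈ Icc 1 (p - 1), (1 + ∑ j ∈ Icc 1 (p - 1),
          (k.choose j * (k + j).choose j : ZMod p)) * (k : ZMod p)⁻¹ := by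
        refine sum_congr rfl fun k hk => ?_
        rw [delannoy_eq_one_add_sum (mem_Icc.mp hk).2]
        push_cast
        rfl
    _ = ∑ k ∈ Icc 1 (p - 1), (k : ZMod p)⁻¹ + ∑ j ∈ Icc 1 (p - 1),
          (∑ k ∈ Icc 1 (p - 1), ((k - 1).choose (j - 1) * (k + j).choose j : ZMod p)) *
            (j : ZMod p)⁻¹ := by
        simp only [add_mul, one_mul, sum_add_distrib, sum_mul]
        rw [sum_comm]
        refine congrArg _ (sum_congr rfl fun j hj => sum_congr rfl fun k hk => ?_)
        rw [mul_right_comm, Nat.cast_choose_mul_inv_eq (natCast_ne_zero_of_mem_Icc hk)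
          (natCast_ne_zero_of_mem_Icc hj)]
        ring
    _ = _ := by
        refine congrArg _ (sum_congr rfl fun j hj => ?_)
        rw [sum_Icc_choose_sub_one_mul_choose_add hj]

theorem sum_Icc_neg_one_pow_mul_choose_two_mul_mul_inv :
    ∑ j ∈ Icc 1 (p - 1), (-1) ^ j * ((p - 1).choose (2 * j) : ZMod p) * (j : ZMod p)⁻¹ =
      ∑ j ∈ Icc 1 ((p - 1) / 2), (-1) ^ j * (j : ZMod p)⁻¹ := by
  rw [← sum_subset (Icc_subset_Icc_right (by omega : (p - 1) / 2 ≤ p - 1)) fun j hj hj' => ?_]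
  · refine sum_congr rfl fun j hj => ?_
    rw [mem_Icc] at hj
    rw [natCast_choose_sub_one (by omega), pow_mul]
    simp
  · rw [mem_Icc] at hj hj'
    rw [Nat.choose_eq_zero_of_lt (by omega), Nat.cast_zero, mul_zero, zero_mul]

theorem natCast_choose_div_self {k : ℕ} (hk : k ∈ Icc 1 (p - 1)) :
    ((p.choose k / p : ℕ) : ZMod p) = -(-1) ^ k * (k : ZMod p)⁻¹ := by
  have hp := (Fact.out : p.Prime)
  rw [mem_Icc] at hk
  have hmul : p.choose k / p * k = (p - 1).choose (k - 1) := by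
    refine Nat.eq_of_mul_eq_mul_left hp.pos ?_
    have h := Nat.add_one_mul_choose_eq (p - 1) (k - 1)
    rw [Nat.sub_add_cancel hp.one_le, Nat.sub_add_cancel hk.1] at h
    rw [← mul_assoc, Nat.mul_div_cancel' (hp.dvd_choose_self (by omega) (by omega)), h]
  have hcast := congrArg (Nat.cast : ℕ → ZMod p) hmul
  rw [Nat.cast_mul, natCast_choose_sub_one (by omega)] at hcast
  rw [(eq_mul_inv_iff_mul_eq₀ (natCast_ne_zero_of_mem_Icc (mem_Icc.mpr hk))).mpr hcast]
  obtain ⟨i, rfl⟩ := Nat.exists_eq_add_one_of_ne_zero (n := k) (by omega)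
  rw [Nat.add_sub_cancel, pow_succ]
  ring

theorem intCast_fermatQuotient_two_eq (hp : Odd p) :
    (((2 ^ (p - 1) - 1) / p : ℤ) : ZMod p) =
      -∑ k ∈ Icc 1 ((p - 1) / 2), (-1) ^ k * (k : ZMod p)⁻¹ := by
  have hprime := (Fact.out : p.Prime)
  obtain ⟨m, hm⟩ := hp
  have hhalf : (p - 1) / 2 = m := by omega
  have hmul : ∀ k ∈ Icc 1 m, (p : ℤ) * ((p.choose k / p : ℕ) : ℤ) = p.choose k := fun k hk => by
    rw [mem_Icc] at hk
    exact_mod_cast Nat.mul_div_cancel' (hprime.dvd_choose_self (by omega) (by omega))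
  have hfactor : (2 ^ (p - 1) - 1 : ℤ) = p * ∑ k ∈ Icc 1 m, ((p.choose k / p : ℕ) : ℤ) := by
    have h := congrArg (Nat.cast : ℕ → ℤ) (Nat.sum_range_choose_halfway m)
    rw [sum_range_succ_eq_add_sum_Icc, ← hm, Nat.choose_zero_right] at h
    rw [mul_sum, sum_congr rfl hmul, show p - 1 = 2 * m by omega, pow_mul]
    push_cast at h
    norm_num
    linarith
  rw [hfactor, Int.mul_ediv_cancel_left _ (by exact_mod_cast hprime.ne_zero), Int.cast_sum,
    ← sum_neg_distrib, hhalf]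
  refine sum_congr rfl fun k hk => ?_
  rw [mem_Icc] at hk
  rw [Int.cast_natCast, natCast_choose_div_self (mem_Icc.mpr ⟨hk.1, by omega⟩), neg_mul]

end ZMod

theorem sun_1_2 (p : ℕ) [Fact p.Prime] (hp : Odd p) :
    ∑ k ∈ Finset.Icc 1 (p - 1), (delannoy k : ZMod p) * (k : ZMod p)⁻¹ =
      -(((2 ^ (p - 1) - 1) / p : ℤ) : ZMod p) := by
  have hp2 : p ≠ 2 := by
    rintro rfl
    exact Nat.not_odd_iff_even.mpr even_two hp
  rw [ZMod.sum_delannoy_mul_inv, ZMod.sum_Icc_inv_natCast_eq_zero hp2, zero_add,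
    ZMod.sum_Icc_neg_one_pow_mul_choose_two_mul_mul_inv, ZMod.intCast_fermatQuotient_two_eq hp,
    neg_neg]
end

section
/- Let p be an odd prime and m an integer not divisible by p. Then $\sum_{k=1}^{p-1} \frac{S_k}{m^k} \equiv \frac{m^2-6m+1}{2m}\left(1 - \left(\frac{m^2-6m+1}{p}\right)\right) \pmod{p}$, where $1/m^k$ and $1/(2m)$ denote inverses mod p, and $(\frac{\cdot}{p})$ is the Legendre symbol (taking value 0 when p divides the argument). -/
/-!
Put `t = m⁻¹` and `n = (p - 1) / 2`, so that `n ≡ -1/2` mod `p`. Exchanging the sums,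
`∑_{k<p} S_k t^k = ∑_{j<p} C_j ∑_{k<p} C(k+j, 2j) t^k`. Modulo `p` the inner sum is the
truncated negative binomial series `t^j (1 - t)^(p-1-2j)` when `2j < p`, because
`C(p-1-2j, i) ≡ (-1)^i C(2j+i, i)`. From `C(2j, j) ≡ (-4)^j C(n, j)` one gets
`-2 C_j ≡ (-4)^(j+1) C(n+1, j+1)` for `j < p - 1`, while `C_{p-1} ≡ -1`. The binomial theorem
then gives `-2t ∑_{k=1}^{p-1} S_k t^k = q^(n+1) - q` with
`q = (1 - t)^2 - 4t = t^2 - 6t + 1 = (m^2 - 6m + 1) t^2`, and Euler's criterion identifies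
`q^n = (m^2 - 6m + 1)^n` with the Legendre symbol.
-/

/-- The `k`-th (large) Schröder number. -/
def schroeder (k : ℕ) : ℕ := ∑ j ∈ Finset.range (k + 1), (k + j).choose (2 * j) * catalan j

open Finset Nat

lemma two_mul_add_one_mul_catalan (n : ℕ) : (2 * n + 1) * catalan n = (2 * n + 1).choose n := by
  apply Nat.eq_of_mul_eq_mul_left n.succ_pos
  calc (n + 1) * ((2 * n + 1) * catalan n) = (2 * n).choose n * (2 * n + 1) := by
        rw [mul_left_comm, succ_mul_catalan_eq_centralBinom, centralBinom_eq_two_mul_choose,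
          mul_comm]
    _ = (n + 1) * (2 * n + 1).choose n := by
        rw [Nat.choose_mul_succ_eq, mul_comm, show 2 * n + 1 - n = n + 1 by omega]

lemma sum_range_schroeder_mul_pow {R : Type*} [CommSemiring R] (N : ℕ) (x : R) :
    ∑ k ∈ range N, (schroeder k : R) * x ^ k =
      ∑ j ∈ range N,
        (catalan j : R) * ∑ k ∈ range N, ((k + j).choose (2 * j) : R) * x ^ k := by
  have hext : ∀ k ∈ range N, (schroeder k : R) * x ^ k =
      ∑ j ∈ range N, (catalan j : R) * (((k + j).choose (2 * j) : R) * x ^ k) := by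
    intro k hk
    rw [mem_range] at hk
    rw [schroeder, Nat.cast_sum, sum_mul]
    refine (sum_subset (range_subset_range.mpr (by omega)) fun j _ hj ↦ ?_).trans
      (sum_congr rfl fun j _ ↦ by push_cast; ring)
    rw [mem_range] at hj
    rw [Nat.choose_eq_zero_of_lt (by omega), zero_mul, Nat.cast_zero, zero_mul]
  rw [sum_congr rfl hext, sum_comm]
  simp only [mul_sum]

lemma sum_range_succ_choose_add_mul_pow {R : Type*} [CommSemiring R] (N : ℕ) (x : R) :
    ∑ k ∈ range (N + 1), ((k + N).choose (2 * N) : R) * x ^ k = x ^ N := by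
  rw [sum_range_succ, sum_eq_zero fun k hk ↦ ?_, ← two_mul, Nat.choose_self]
  · simp
  · rw [Nat.choose_eq_zero_of_lt (by rw [mem_range] at hk; omega), Nat.cast_zero, zero_mul]

namespace ZMod

variable {p : ℕ} [Fact p.Prime]

lemma natCast_ne_zero_of_pos_of_lt {k : ℕ} (h0 : 0 < k) (hk : k < p) : (k : ZMod p) ≠ 0 := by
  rw [Ne, natCast_eq_zero_iff]
  exact Nat.not_dvd_of_pos_of_lt h0 hk

lemma natCast_self_sub {k : ℕ} (hk : k ≤ p) : ((p - k : ℕ) : ZMod p) = -k := by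
  rw [Nat.cast_sub hk, natCast_self, zero_sub]

lemma natCast_choose_pred_sub {a b : ℕ} (hab : a + b < p) :
    ((p - 1 - a).choose b : ZMod p) = (-1) ^ b * (a + b).choose b := by
  induction b with
  | zero => simp
  | succ b ih =>
    have hstep := Nat.choose_succ_right_eq (p - 1 - a) b
    rw [show p - 1 - a - b = p - (a + b + 1) by omega] at hstep
    have hpascal := Nat.add_one_mul_choose_eq (a + b) b
    apply mul_right_cancel₀ (natCast_ne_zero_of_pos_of_lt b.succ_pos (by omega) :
      ((b + 1 : ℕ) : ZMod p) ≠ 0)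
    calc ((p - 1 - a).choose (b + 1) : ZMod p) * (b + 1 : ℕ)
        = (p - 1 - a).choose b * (p - (a + b + 1) : ℕ) := by
          rw [← Nat.cast_mul, ← Nat.cast_mul, hstep]
      _ = (-1) ^ (b + 1) * ((a + b + 1 : ℕ) * (a + b).choose b) := by
        rw [ih (by omega), natCast_self_sub (by omega)]; ring
      _ = (-1) ^ (b + 1) * (a + (b + 1)).choose (b + 1) * (b + 1 : ℕ) := by
        rw [← add_assoc, mul_assoc, ← Nat.cast_mul, hpascal, Nat.cast_mul]

lemma two_mul_natCast_half (hp : Odd p) : 2 * ((p / 2 : ℕ) : ZMod p) = -1 := by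
  have h := congrArg (Nat.cast : ℕ → ZMod p) (Nat.two_mul_div_two_add_one_of_odd hp)
  push_cast [natCast_self] at h
  linear_combination h

lemma natCast_centralBinom (hp : Odd p) {j : ℕ} (hj : j < p) :
    (centralBinom j : ZMod p) = (-4) ^ j * (p / 2).choose j := by
  induction j with
  | zero => simp
  | succ j ih =>
    have hstep : ((p / 2).choose (j + 1) * (j + 1 : ℕ) : ZMod p) =
        (p / 2).choose j * ((p / 2 : ℕ) - j) := by
      rcases le_or_gt j (p / 2) with hle | hlt
      · rw [← Nat.cast_sub hle, ← Nat.cast_mul, ← Nat.cast_mul, Nat.choose_succ_right_eq]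
      · simp [Nat.choose_eq_zero_of_lt hlt, Nat.choose_eq_zero_of_lt (hlt.trans j.lt_succ_self)]
    apply mul_left_cancel₀ (natCast_ne_zero_of_pos_of_lt j.succ_pos hj)
    calc ((j + 1 : ℕ) : ZMod p) * centralBinom (j + 1)
        = 2 * (2 * j + 1) * centralBinom j := by
          exact_mod_cast congrArg (Nat.cast : ℕ → ZMod p) (succ_mul_centralBinom_succ j)
      _ = (-4) ^ (j + 1) * ((p / 2).choose j * ((p / 2 : ℕ) - j)) := by
        rw [ih (by omega)]
        linear_combination 2 * (-4) ^ j * ((p / 2).choose j : ZMod p) * two_mul_natCast_half hp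
      _ = ((j + 1 : ℕ) : ZMod p) * ((-4) ^ (j + 1) * (p / 2).choose (j + 1)) := by
        rw [← hstep]; ring

lemma neg_two_mul_natCast_catalan (hp : Odd p) {j : ℕ} (hj : j + 1 < p) :
    -2 * (catalan j : ZMod p) = (-4) ^ (j + 1) * (p / 2 + 1).choose (j + 1) := by
  apply mul_left_cancel₀ (natCast_ne_zero_of_pos_of_lt j.succ_pos hj)
  have hpascal : (((p / 2 : ℕ) + 1) * (p / 2).choose j : ZMod p) =
      (p / 2 + 1).choose (j + 1) * (j + 1 : ℕ) := by
    exact_mod_cast congrArg (Nat.cast : ℕ → ZMod p) (Nat.add_one_mul_choose_eq (p / 2) j)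
  calc ((j + 1 : ℕ) : ZMod p) * (-2 * catalan j)
      = -2 * centralBinom j := by
        rw [← succ_mul_catalan_eq_centralBinom]; push_cast; ring
    _ = (-4) ^ j * (-4 * ((p / 2 : ℕ) + 1)) * (p / 2).choose j := by
        rw [natCast_centralBinom hp (by omega)]
        linear_combination 2 * (-4) ^ j * ((p / 2).choose j : ZMod p) * two_mul_natCast_half hp
    _ = ((j + 1 : ℕ) : ZMod p) * ((-4) ^ (j + 1) * (p / 2 + 1).choose (j + 1)) := by
        linear_combination (-4) ^ (j + 1) * hpascal

lemma natCast_catalan_pred : (catalan (p - 1) : ZMod p) = -1 := by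
  have hp := (Fact.out : p.Prime).one_lt
  have hlucas : (2 * (p - 1) + 1).choose (p - 1) ≡ 1 [MOD p] := by
    have hlt : p - 1 < p := by omega
    have hsplit : 2 * (p - 1) + 1 = p - 1 + p := by omega
    simpa [hsplit, Nat.mod_eq_of_lt hlt, Nat.div_eq_of_lt hlt,
      Nat.add_div_right _ (by omega : 0 < p)] using
      Choose.choose_modEq_choose_mod_mul_choose_div_nat (n := 2 * (p - 1) + 1) (k := p - 1) (p := p)
  have h := (natCast_eq_natCast_iff _ _ _).mpr hlucas
  rw [← two_mul_add_one_mul_catalan] at h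
  push_cast [Nat.cast_sub hp.le, natCast_self] at h
  linear_combination -h

lemma sum_range_choose_add_mul_pow {d : ℕ} (hd : d < p) (t : ZMod p) :
    ∑ i ∈ range (p - d), ((d + i).choose d : ZMod p) * t ^ i = (1 - t) ^ (p - 1 - d) := by
  rw [sub_eq_neg_add, add_pow, show p - d = p - 1 - d + 1 by omega]
  refine sum_congr rfl fun i hi ↦ ?_
  rw [mem_range] at hi
  rw [one_pow, mul_one, natCast_choose_pred_sub (by omega), Nat.choose_symm_add, neg_pow]
  have hsign : (-1 : ZMod p) ^ i * (-1) ^ i = 1 := by rw [← mul_pow]; norm_num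
  linear_combination -(t ^ i * ((d + i).choose i : ZMod p)) * hsign

lemma sum_range_choose_add_two_mul_mul_pow {j : ℕ} (hj : 2 * j < p) (t : ZMod p) :
    ∑ k ∈ range p, ((k + j).choose (2 * j) : ZMod p) * t ^ k =
      t ^ j * (1 - t) ^ (p - 1 - 2 * j) := by
  have hsplit : range p = range (j + (p - 2 * j + j)) := by congr 1; omega
  rw [hsplit, sum_range_add, sum_range_add, ← sum_range_choose_add_mul_pow hj, mul_sum]
  have below : ∑ k ∈ range j, ((k + j).choose (2 * j) : ZMod p) * t ^ k = 0 :=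
    sum_eq_zero fun k hk ↦ by
      rw [Nat.choose_eq_zero_of_lt (by rw [mem_range] at hk; omega), Nat.cast_zero, zero_mul]
  have above : ∑ l ∈ range j,
      ((j + (p - 2 * j + l) + j).choose (2 * j) : ZMod p) * t ^ (j + (p - 2 * j + l)) = 0 :=
    sum_eq_zero fun l hl ↦ by
      rw [mem_range] at hl
      rw [(natCast_eq_zero_iff _ _).mpr ((Fact.out : p.Prime).dvd_choose hj (by omega) (by omega)),
        zero_mul]
  rw [below, above, zero_add, add_zero]
  refine sum_congr rfl fun i _ ↦ ?_
  rw [show j + i + j = 2 * j + i by omega, pow_add]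
  ring

lemma neg_two_mul_sum_range_catalan_mul (hp : Odd p) (t : ZMod p) :
    -2 * t * ∑ j ∈ range (p - 1), (catalan j : ZMod p) *
        ∑ k ∈ range p, ((k + j).choose (2 * j) : ZMod p) * t ^ k =
      (t ^ 2 - 6 * t + 1) ^ (p / 2 + 1) - (1 - t) ^ 2 := by
  have hodd := Nat.two_mul_div_two_add_one_of_odd hp
  have hp3 : 3 ≤ p := by have := (Fact.out : p.Prime).two_le; omega
  have hterm : ∀ j ∈ range (p - 1), -2 * t * ((catalan j : ZMod p) *
        ∑ k ∈ range p, ((k + j).choose (2 * j) : ZMod p) * t ^ k) =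
      (-(4 * t)) ^ (j + 1) * ((1 - t) ^ 2) ^ (p / 2 + 1 - (j + 1)) *
        (p / 2 + 1).choose (j + 1) := by
    intro j hj
    rw [mem_range] at hj
    have hcat := neg_two_mul_natCast_catalan hp (j := j) (by omega)
    rcases le_or_gt j (p / 2) with hle | hlt
    · rw [sum_range_choose_add_two_mul_mul_pow (by omega),
        show p - 1 - 2 * j = 2 * (p / 2 + 1 - (j + 1)) by omega, pow_mul]
      linear_combination t ^ (j + 1) * ((1 - t) ^ 2) ^ (p / 2 + 1 - (j + 1)) * hcat
    · rw [Nat.choose_eq_zero_of_lt (by omega : p / 2 + 1 < j + 1), Nat.cast_zero] at hcat ⊢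
      linear_combination t * (∑ k ∈ range p, ((k + j).choose (2 * j) : ZMod p) * t ^ k) * hcat
  have htrunc : range (p / 2 + 1) ⊆ range (p - 1) := range_subset_range.mpr (by omega)
  have hbinom := add_pow (-(4 * t)) ((1 - t) ^ 2) (p / 2 + 1)
  rw [sum_range_succ', show -(4 * t) + (1 - t) ^ 2 = t ^ 2 - 6 * t + 1 by ring] at hbinom
  have hfrob : ((1 - t) ^ 2) ^ (p / 2 + 1) = (1 - t) ^ 2 := by
    rw [← pow_mul, show 2 * (p / 2 + 1) = p + 1 by omega, pow_succ, pow_card, sq]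
  rw [mul_sum, sum_congr rfl hterm, ← sum_subset htrunc fun j _ hj ↦ ?_, hbinom]
  · simp [hfrob]
  · rw [mem_range] at hj
    rw [Nat.choose_eq_zero_of_lt (by omega), Nat.cast_zero, mul_zero]

lemma neg_two_mul_sum_schroeder_mul_pow (hp : Odd p) (t : ZMod p) :
    -2 * t * ∑ k ∈ Icc 1 (p - 1), (schroeder k : ZMod p) * t ^ k =
      (t ^ 2 - 6 * t + 1) ^ (p / 2 + 1) - (t ^ 2 - 6 * t + 1) := by
  have hp1 := (Fact.out : p.Prime).one_lt
  have hlast : range p = range (p - 1 + 1) := by congr 1; omega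
  have hk0 : ∑ k ∈ range p, (schroeder k : ZMod p) * t ^ k =
      1 + ∑ k ∈ Icc 1 (p - 1), (schroeder k : ZMod p) * t ^ k := by
    rw [show range p = insert 0 (Icc 1 (p - 1)) by ext; simp; omega, sum_insert (by simp)]
    simp [schroeder]
  have hA : ∑ k ∈ range p, ((k + (p - 1)).choose (2 * (p - 1)) : ZMod p) * t ^ k =
      t ^ (p - 1) := by
    rw [hlast]; exact sum_range_succ_choose_add_mul_pow _ _
  have hfrob : t * t ^ (p - 1) = t := by
    rw [mul_comm, ← pow_succ, Nat.sub_add_cancel hp1.le, pow_card]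
  have hsum := sum_range_schroeder_mul_pow p t
  rw [hk0, hlast, sum_range_succ, ← hlast, hA, natCast_catalan_pred] at hsum
  linear_combination -2 * t * hsum + neg_two_mul_sum_range_catalan_mul hp t + 2 * hfrob

end ZMod

theorem sun_1_11 (p : ℕ) [Fact p.Prime] (hp : Odd p) (m : ℤ) (hm : ¬ (p : ℤ) ∣ m) :
    ∑ k ∈ Finset.Icc 1 (p - 1), (schroeder k : ZMod p) * ((m : ZMod p) ^ k)⁻¹ =
      ((m ^ 2 - 6 * m + 1 : ℤ) : ZMod p) * ((2 * m : ZMod p))⁻¹ *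
        (1 - (legendreSym p (m ^ 2 - 6 * m + 1) : ZMod p)) := by
  have hodd := Nat.two_mul_div_two_add_one_of_odd hp
  have h2 : (2 : ZMod p) ≠ 0 := by
    have := (Fact.out : p.Prime).two_le
    exact_mod_cast ZMod.natCast_ne_zero_of_pos_of_lt (p := p) two_pos (by omega)
  have hM : (m : ZMod p) ≠ 0 := by rwa [Ne, ZMod.intCast_zmod_eq_zero_iff_dvd]
  set t := (m : ZMod p)⁻¹
  set a : ZMod p := ((m ^ 2 - 6 * m + 1 : ℤ) : ZMod p) with ha
  have hq : t ^ 2 - 6 * t + 1 = a * t ^ 2 := by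
    push_cast [ha]
    linear_combination (6 * t - m * t - 1) * mul_inv_cancel₀ hM
  have hpow : (t ^ 2 - 6 * t + 1) ^ (p / 2 + 1) =
      a * (legendreSym p (m ^ 2 - 6 * m + 1) : ZMod p) * t ^ 2 := by
    rw [hq, mul_pow, pow_succ, ← pow_mul, legendreSym.eq_pow,
      show 2 * (p / 2 + 1) = p + 1 by omega, pow_succ, ZMod.pow_card]
    ring
  simp only [← inv_pow]
  apply mul_left_cancel₀ (mul_ne_zero (neg_ne_zero.mpr h2) (inv_ne_zero hM))
  rw [ZMod.neg_two_mul_sum_schroeder_mul_pow hp, hpow, hq, mul_inv]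
  linear_combination a * t ^ 2 * (1 - (legendreSym p (m ^ 2 - 6 * m + 1) : ZMod p)) *
    mul_inv_cancel₀ h2
end

section
/- For every odd prime p, $\sum_{k=1}^{p-1} S_k \equiv 2\left(\frac{-1}{p}\right) - 2^p \pmod{p^2}$. -/
/-!
Write `T n j = C(n+j, 2j+1) C_j` (`schroederSummand n j`). The hockey-stick identity gives
`∑_{k<n} S_k = ∑_{j<n} T n j`, and `(j+1)(2j+1) T n j = n C(n+j, j) C(n-1, j)`. For a prime `p`
and `j < p`, `(j!)² C(p+j, j) C(p-1, j) = ∏_{i=1}^{j} (p² - i²) ≡ (-1)^j (j!)² (mod p²)`, hence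
`(j+1)(2j+1) T p j ≡ (-1)^j p (mod p³)`. At `j = p-1` and `j = (p-1)/2`, where `p` divides
`(j+1)(2j+1)`, this determines `T p j` modulo `p²` once `p` is cancelled. For every other
`j < p-1` it gives `T p j + C(p, j+1) ≡ 2p (-1)^j / (2j+1) (mod p²)`, because
`(j+1) C(p, j+1) ≡ (-1)^j p`. The symmetry `j ↦ p-1-j` makes `∑_{j<p} (-1)^j / (2j+1)` vanish
modulo `p`, and `∑_{j<p-1} C(p, j+1) = 2^p - 2`.
-/

def schroederSummand (n j : ℕ) : ℕ := (n + j).choose (2 * j + 1) * catalan j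

open Finset Nat

theorem sum_range_add_choose_two_mul (n j : ℕ) :
    ∑ k ∈ range n, (k + j).choose (2 * j) = (n + j).choose (2 * j + 1) := by
  induction n with
  | zero => rw [sum_range_zero, zero_add, choose_eq_zero_of_lt (by omega)]
  | succ n ih => rw [sum_range_succ, ih, Nat.add_right_comm, choose_succ_succ', add_comm]

theorem sum_range_schroeder (n : ℕ) :
    ∑ k ∈ range n, schroeder k = ∑ j ∈ range n, schroederSummand n j := by
  have extend (k : ℕ) (hk : k ∈ range n) :
      schroeder k = ∑ j ∈ range n, (k + j).choose (2 * j) * catalan j := by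
    apply sum_subset
    · intro j hj
      simp only [mem_range] at hj hk ⊢
      omega
    · intro j _ hj
      rw [mem_range] at hj
      rw [choose_eq_zero_of_lt (by omega), zero_mul]
  rw [sum_congr rfl extend, sum_comm]
  exact sum_congr rfl fun j _ => by rw [← sum_mul, sum_range_add_choose_two_mul, schroederSummand]

theorem sum_Icc_schroeder_add_one {n : ℕ} (hn : n ≠ 0) :
    ∑ k ∈ Icc 1 (n - 1), schroeder k + 1 = ∑ k ∈ range n, schroeder k := by
  have hS0 : schroeder 0 = 1 := by simp [schroeder]
  rw [range_eq_Ico, sum_eq_sum_Ico_succ_bot (by omega), hS0, add_comm,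
    ← Ico_add_one_right_eq_Icc, Nat.sub_add_cancel (by omega)]

theorem add_one_mul_two_mul_add_one_mul_schroederSummand {n j : ℕ} (hj : j < n) :
    (j + 1) * (2 * j + 1) * schroederSummand n j = n * ((n + j).choose j * (n - 1).choose j) := by
  have hcat : (j + 1) * (2 * j + 1) * catalan j = (2 * j + 1).choose (j + 1) * (j + 1) := by
    rw [mul_comm (j + 1), mul_assoc, succ_mul_catalan_eq_centralBinom,
      centralBinom_eq_two_mul_choose, add_one_mul_choose_eq]
  have hmul : (n + j).choose (2 * j + 1) * (2 * j + 1).choose (j + 1) =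
      (n + j).choose (j + 1) * (n - 1).choose j := by
    rw [choose_mul (by omega), show n + j - (j + 1) = n - 1 by omega,
      show 2 * j + 1 - (j + 1) = j by omega]
  have hsucc : (n + j).choose (j + 1) * (j + 1) = (n + j).choose j * n := by
    rw [choose_succ_right_eq, Nat.add_sub_cancel]
  calc (j + 1) * (2 * j + 1) * schroederSummand n j
      = (n + j).choose (2 * j + 1) * ((j + 1) * (2 * j + 1) * catalan j) := by
        rw [schroederSummand]; ring
    _ = (n + j).choose (2 * j + 1) * (2 * j + 1).choose (j + 1) * (j + 1) := by rw [hcat]; ring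
    _ = (n + j).choose (j + 1) * (j + 1) * (n - 1).choose j := by rw [hmul]; ring
    _ = n * ((n + j).choose j * (n - 1).choose j) := by rw [hsucc]; ring

theorem sum_range_pred_choose_succ_add_two {n : ℕ} (hn : n ≠ 0) :
    ∑ j ∈ range (n - 1), n.choose (j + 1) + 2 = 2 ^ n := by
  obtain ⟨n, rfl⟩ := exists_eq_succ_of_ne_zero hn
  rw [← sum_range_choose, sum_range_succ', sum_range_succ, choose_self, choose_zero_right,
    Nat.succ_sub_one]

section CommRing

variable {A : Type*} [CommRing A]

theorem factorial_mul_choose_add_eq_prod (n k : ℕ) :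
    (k ! * (n + k).choose k : A) = ∏ i ∈ range k, ((n : A) + (i + 1)) := by
  rw [← Nat.cast_mul, ← ascFactorial_eq_factorial_mul_choose, ascFactorial_eq_prod_range,
    Nat.cast_prod]
  exact prod_congr rfl fun i _ => by push_cast; ring

theorem factorial_mul_choose_pred_eq_prod {n k : ℕ} (hk : k < n) :
    (k ! * (n - 1).choose k : A) = ∏ i ∈ range k, ((n : A) - (i + 1)) := by
  rw [← Nat.cast_mul, ← descFactorial_eq_factorial_mul_choose, descFactorial_eq_prod_range,
    Nat.cast_prod]
  refine prod_congr rfl fun i hi => ?_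
  rw [mem_range] at hi
  rw [Nat.cast_sub (by omega), Nat.cast_sub (by omega)]
  push_cast
  ring

theorem cast_factorial_eq_prod (k : ℕ) : (k ! : A) = ∏ i ∈ range k, ((i : A) + 1) := by
  rw [← prod_range_add_one_eq_factorial]
  push_cast
  rfl

theorem factorial_mul_choose_pred_of_natCast_eq_zero {n k : ℕ} (hn : (n : A) = 0) (hk : k < n) :
    (k ! * (n - 1).choose k : A) = (-1) ^ k * k ! := by
  simp_rw [factorial_mul_choose_pred_eq_prod hk, hn, zero_sub, prod_neg, card_range,
    cast_factorial_eq_prod]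

theorem sq_factorial_mul_choose_add_mul_choose_pred {n k : ℕ} (hn : (n : A) ^ 2 = 0)
    (hk : k < n) :
    (k ! ^ 2 * ((n + k).choose k * (n - 1).choose k) : A) = (-1) ^ k * k ! ^ 2 := by
  calc (k ! ^ 2 * ((n + k).choose k * (n - 1).choose k) : A)
      = (k ! * (n + k).choose k : A) * (k ! * (n - 1).choose k) := by ring
    _ = ∏ i ∈ range k, -((i : A) + 1) ^ 2 := by
      rw [factorial_mul_choose_add_eq_prod, factorial_mul_choose_pred_eq_prod hk,
        ← prod_mul_distrib]
      exact prod_congr rfl fun i _ => by linear_combination hn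
    _ = (-1) ^ k * k ! ^ 2 := by rw [prod_neg, card_range, prod_pow, cast_factorial_eq_prod]

end CommRing

namespace ZMod

theorem natCast_pow_self_eq_zero (n k : ℕ) : (n : ZMod (n ^ k)) ^ k = 0 := by
  exact_mod_cast natCast_self (n ^ k)

theorem natCast_ne_zero_of_pos_of_lt_s16 {n a : ℕ} (h0 : 0 < a) (h : a < n) : (a : ZMod n) ≠ 0 := by
  rw [Ne, natCast_eq_zero_iff]
  exact fun hdvd => absurd (Nat.le_of_dvd h0 hdvd) (by omega)

/-- The map `x ↦ n * x` from `ZMod n` to `ZMod (n ^ 2)`, well defined since `n * n = 0` there. -/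
def mulModulus (n : ℕ) : ZMod n →+ ZMod (n ^ 2) :=
  lift n ⟨(AddMonoidHom.mulLeft (n : ZMod (n ^ 2))).comp (Int.castAddHom _), by
    simp [← sq, natCast_pow_self_eq_zero]⟩

theorem mulModulus_intCast (n : ℕ) (z : ℤ) : mulModulus n z = n * z :=
  lift_coe _ _ _

theorem mulModulus_natCast (n k : ℕ) : mulModulus n k = n * k := by
  exact_mod_cast mulModulus_intCast n k

theorem mulModulus_neg_one_pow (n k : ℕ) : mulModulus n ((-1) ^ k) = n * (-1) ^ k := by
  exact_mod_cast mulModulus_intCast n ((-1) ^ k)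

theorem eq_mulModulus_div {p : ℕ} [Fact p.Prime] {a : ℕ} (ha : (a : ZMod p) ≠ 0)
    {x : ZMod (p ^ 2)} {y : ZMod p} (h : (a : ZMod (p ^ 2)) * x = mulModulus p y) :
    x = mulModulus p (y / a) := by
  have hu : IsUnit (a : ZMod (p ^ 2)) :=
    (isUnit_natCast_iff_not_dvd_pow Fact.out two_pos).2 ((natCast_eq_zero_iff a p).not.1 ha)
  refine hu.mul_left_cancel ?_
  rw [h, ← nsmul_eq_mul, ← map_nsmul, nsmul_eq_mul, mul_div_cancel₀ _ ha]

end ZMod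

section Prime

variable {p : ℕ} [hp : Fact p.Prime]

theorem choose_pred_eq_neg_one_pow {k : ℕ} (hk : k < p) :
    ((p - 1).choose k : ZMod p) = (-1) ^ k := by
  have hk! : (k ! : ZMod p) ≠ 0 := by
    rw [Ne, ZMod.natCast_eq_zero_iff, hp.out.dvd_factorial]
    omega
  refine mul_left_cancel₀ hk! ?_
  rw [factorial_mul_choose_pred_of_natCast_eq_zero (ZMod.natCast_self p) hk, mul_comm]

theorem choose_add_mul_choose_pred_eq_neg_one_pow {k : ℕ} (hk : k < p) :
    (((p + k).choose k * (p - 1).choose k : ℕ) : ZMod (p ^ 2)) = (-1) ^ k := by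
  have hk! : IsUnit ((k ! : ZMod (p ^ 2)) ^ 2) := by
    refine ((ZMod.isUnit_natCast_iff_not_dvd_pow hp.out two_pos).2 ?_).pow 2
    rw [hp.out.dvd_factorial]
    omega
  refine hk!.mul_left_cancel ?_
  push_cast
  rw [sq_factorial_mul_choose_add_mul_choose_pred (ZMod.natCast_pow_self_eq_zero p 2) hk, mul_comm]

theorem choose_succ_eq_mulModulus {j : ℕ} (hj : j + 1 < p) :
    (p.choose (j + 1) : ZMod (p ^ 2)) = ZMod.mulModulus p ((-1) ^ j / (j + 1 : ℕ)) := by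
  refine ZMod.eq_mulModulus_div (ZMod.natCast_ne_zero_of_pos_of_lt_s16 (by omega) hj) ?_
  have h := add_one_mul_choose_eq (p - 1) j
  rw [Nat.sub_add_cancel hp.out.one_le] at h
  rw [← choose_pred_eq_neg_one_pow (by omega), ZMod.mulModulus_natCast]
  exact_mod_cast congrArg Nat.cast ((mul_comm _ _).trans h.symm)

theorem schroederSummand_eq_mulModulus {j : ℕ} (hj : j < p)
    (ha : (((j + 1) * (2 * j + 1) : ℕ) : ZMod p) ≠ 0) :
    (schroederSummand p j : ZMod (p ^ 2)) =
      ZMod.mulModulus p ((-1) ^ j / ((j + 1) * (2 * j + 1) : ℕ)) := by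
  refine ZMod.eq_mulModulus_div ha ?_
  rw [ZMod.mulModulus_neg_one_pow, ← choose_add_mul_choose_pred_eq_neg_one_pow hj]
  exact_mod_cast congrArg Nat.cast (add_one_mul_two_mul_add_one_mul_schroederSummand hj)

theorem schroederSummand_add_choose_succ {j : ℕ} (hj : j + 1 < p) (hjp : 2 * j + 1 ≠ p) :
    (schroederSummand p j + p.choose (j + 1) : ZMod (p ^ 2)) =
      2 * ZMod.mulModulus p ((-1) ^ j / (2 * j + 1 : ℕ)) := by
  have h1 : ((j + 1 : ℕ) : ZMod p) ≠ 0 := ZMod.natCast_ne_zero_of_pos_of_lt_s16 (by omega) hj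
  have h2 : ((2 * j + 1 : ℕ) : ZMod p) ≠ 0 := by
    rw [Ne, ZMod.natCast_eq_zero_iff]
    exact fun hdvd => hjp (Nat.eq_of_dvd_of_lt_two_mul (by omega) hdvd (by omega))
  rw [schroederSummand_eq_mulModulus (by omega) (by rw [Nat.cast_mul]; exact mul_ne_zero h1 h2),
    choose_succ_eq_mulModulus hj, ← map_add, two_mul (ZMod.mulModulus p _), ← map_add]
  congr 1
  push_cast at h1 h2 ⊢
  rw [div_add_div _ _ (mul_ne_zero h1 h2) h1, ← add_div, div_eq_div_iff (by simp [*]) h2]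
  ring

theorem schroederSummand_add_choose_succ_of_two_mul_add_one_eq {m : ℕ} (hm : 2 * m + 1 = p) :
    (schroederSummand p m + p.choose (m + 1) : ZMod (p ^ 2)) = 2 * (-1) ^ m := by
  have hX : (m + 1) * schroederSummand p m = (p + m).choose m * (p - 1).choose m := by
    have h := add_one_mul_two_mul_add_one_mul_schroederSummand (n := p) (j := m) (by omega)
    rw [hm] at h
    exact Nat.eq_of_mul_eq_mul_left hp.out.pos (by rw [← h]; ring)
  have hT : ((m + 1 : ℕ) : ZMod (p ^ 2)) * schroederSummand p m = (-1) ^ m := by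
    rw [← Nat.cast_mul, hX, choose_add_mul_choose_pred_eq_neg_one_pow (k := m) (by omega)]
  have hp2 := ZMod.natCast_pow_self_eq_zero p 2
  have hmR : ((m + 1 : ℕ) : ZMod (p ^ 2)) * 2 = p + 1 := by
    exact_mod_cast congrArg (Nat.cast : ℕ → ZMod (p ^ 2)) (show (m + 1) * 2 = p + 1 by omega)
  have hmF : ((m + 1 : ℕ) : ZMod p) * 2 = 1 := by
    have h := congrArg (Nat.cast : ℕ → ZMod p) (show (m + 1) * 2 = p + 1 by omega)
    push_cast at h ⊢
    rw [h, ZMod.natCast_self, zero_add]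
  have hC : ZMod.mulModulus p ((-1) ^ m / (m + 1 : ℕ)) = 2 * p * (-1) ^ m := by
    have hdiv : ((-1) ^ m / (m + 1 : ℕ) : ZMod p) = 2 * (-1) ^ m := by
      rw [div_eq_iff (left_ne_zero_of_mul_eq_one hmF)]
      linear_combination -(-1) ^ m * hmF
    rw [hdiv, two_mul, map_add, ZMod.mulModulus_neg_one_pow]
    ring
  rw [choose_succ_eq_mulModulus (j := m) (by have := hp.out.two_le; omega), hC]
  linear_combination (2 * (1 - p) : ZMod (p ^ 2)) * hT - schroederSummand p m * (1 - p) * hmR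
    + schroederSummand p m * hp2

theorem catalan_pred_eq (hodd : Odd p) : (catalan (p - 1) : ZMod (p ^ 2)) = -1 - 2 * p := by
  have hp1 := hp.out.one_le
  have hX : (p + (p - 1)) * catalan (p - 1) =
      (p + (p - 1)).choose (p - 1) * (p - 1).choose (p - 1) := by
    have h := add_one_mul_two_mul_add_one_mul_schroederSummand (n := p) (j := p - 1) (by omega)
    rw [schroederSummand, show 2 * (p - 1) + 1 = p + (p - 1) by omega, choose_self, one_mul,
      Nat.sub_add_cancel hp1, mul_assoc] at h
    exact Nat.eq_of_mul_eq_mul_left hp.out.pos h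
  have h := choose_add_mul_choose_pred_eq_neg_one_pow (p := p) (k := p - 1) (by omega)
  rw [← hX, (Nat.Odd.sub_odd hodd odd_one).neg_one_pow] at h
  push_cast [hp1] at h
  have hp2 := ZMod.natCast_pow_self_eq_zero p 2
  linear_combination (-(2 * p + 1) : ZMod (p ^ 2)) * h + 4 * (catalan (p - 1) : ZMod (p ^ 2)) * hp2

theorem sum_range_neg_one_pow_div_two_mul_add_one (hodd : Odd p) :
    ∑ j ∈ range p, ((-1) ^ j / (2 * j + 1 : ℕ) : ZMod p) = 0 := by
  obtain ⟨m, hm⟩ := hodd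
  have hreflect (j : ℕ) (hj : j ∈ range p) :
      ((-1) ^ (p - 1 - j) / (2 * (p - 1 - j) + 1 : ℕ) : ZMod p) =
        -((-1) ^ j / (2 * j + 1 : ℕ)) := by
    rw [mem_range] at hj
    have hsum := congrArg (Nat.cast : ℕ → ZMod p)
      (show (2 * (p - 1 - j) + 1) + (2 * j + 1) = 2 * p by omega)
    rw [Nat.cast_add, Nat.cast_mul, ZMod.natCast_self, mul_zero, add_eq_zero_iff_eq_neg] at hsum
    rw [hsum, div_neg, neg_one_pow_eq_pow_mod_two, neg_one_pow_eq_pow_mod_two (n := j),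
      show (p - 1 - j) % 2 = j % 2 by omega]
  have h := sum_range_reflect (fun j => ((-1) ^ j / (2 * j + 1 : ℕ) : ZMod p)) p
  rw [sum_congr rfl hreflect, sum_neg_distrib, ZMod.neg_eq_self_iff] at h
  exact h.resolve_right (by omega)

theorem sum_range_pred_neg_one_pow_div_two_mul_add_one (hodd : Odd p) :
    ∑ j ∈ range (p - 1), ((-1) ^ j / (2 * j + 1 : ℕ) : ZMod p) = 1 := by
  have h := sum_range_neg_one_pow_div_two_mul_add_one hodd
  rw [show range p = range (p - 1 + 1) by rw [Nat.sub_add_cancel hp.out.one_le],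
    sum_range_succ] at h
  have hlast : ((2 * (p - 1) + 1 : ℕ) : ZMod p) = -1 := by
    have h2p : ((2 * (p - 1) + 1 + 1 : ℕ) : ZMod p) = 0 := by
      rw [show 2 * (p - 1) + 1 + 1 = 2 * p by have := hp.out.one_le; omega, Nat.cast_mul,
        ZMod.natCast_self, mul_zero]
    rw [eq_neg_iff_add_eq_zero]
    exact_mod_cast h2p
  rw [hlast, (Nat.Odd.sub_odd hodd odd_one).neg_one_pow, div_neg, div_one] at h
  linear_combination h

theorem sum_range_schroederSummand {m : ℕ} (hm : 2 * m + 1 = p) :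
    (∑ j ∈ range p, schroederSummand p j : ZMod (p ^ 2)) = 1 + 2 * (-1) ^ m - 2 ^ p := by
  have hodd : Odd p := ⟨m, hm.symm⟩
  have htwo := hp.out.two_le
  let f (j : ℕ) : ZMod p := (-1) ^ j / (2 * j + 1 : ℕ)
  have hcorr : ∑ j ∈ range (p - 1),
      (schroederSummand p j + p.choose (j + 1) - 2 * ZMod.mulModulus p (f j) : ZMod (p ^ 2)) =
        2 * (-1) ^ m := by
    rw [sum_eq_single_of_mem m (mem_range.2 (by omega))]
    · have hfm : f m = 0 := by simp only [f, hm, ZMod.natCast_self, div_zero]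
      rw [hfm, map_zero, mul_zero, sub_zero,
        schroederSummand_add_choose_succ_of_two_mul_add_one_eq hm]
    · intro j hj hjm
      rw [mem_range] at hj
      rw [schroederSummand_add_choose_succ (by omega) (by omega), sub_self]
  have hf : ∑ j ∈ range (p - 1), f j = 1 := sum_range_pred_neg_one_pow_div_two_mul_add_one hodd
  have hchoose := congrArg (Nat.cast : ℕ → ZMod (p ^ 2))
    (sum_range_pred_choose_succ_add_two hp.out.ne_zero)
  have hcat := catalan_pred_eq hodd
  rw [sum_sub_distrib, sum_add_distrib, ← mul_sum, ← map_sum, hf] at hcorr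
  push_cast at hchoose
  rw [show range p = range (p - 1 + 1) by rw [Nat.sub_add_cancel hp.out.one_le], sum_range_succ,
    schroederSummand, show 2 * (p - 1) + 1 = p + (p - 1) by omega, choose_self, one_mul, hcat]
  have hφ1 : ZMod.mulModulus p 1 = p := by simpa using ZMod.mulModulus_natCast p 1
  rw [hφ1] at hcorr
  linear_combination hcorr - hchoose

end Prime

theorem sun_2_2 (p : ℕ) [Fact p.Prime] (hp : Odd p) :
    ∑ k ∈ Finset.Icc 1 (p - 1), (schroeder k : ℤ) ≡
      2 * legendreSym p (-1) - 2 ^ p [ZMOD (p : ℤ) ^ 2] := by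
  obtain ⟨m, hm⟩ := hp
  have hleg : legendreSym p (-1) = (-1) ^ m := by
    rw [legendreSym.at_neg_one (by omega), ZMod.χ₄_eq_neg_one_pow (by omega),
      show p / 2 = m by omega]
  have h := sum_range_schroederSummand (p := p) (m := m) hm.symm
  rw [← Nat.cast_sum, ← sum_range_schroeder, ← sum_Icc_schroeder_add_one (by omega)] at h
  rw [hleg, show (p : ℤ) ^ 2 = ((p ^ 2 : ℕ) : ℤ) by push_cast; rfl,
    ← ZMod.intCast_eq_intCast_iff]
  push_cast at h ⊢
  linear_combination h
end
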